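/- Let (A, m) be a complete local ring and q(t) ∈ A[t] a Weierstrass polynomial of degree d. Then for every f(t) ∈ A[[t]] there exist unique g(t) ∈ A[[t]] and r(t) ∈ A[t] with deg r < d such that f(t) = g(t)·q(t) + r(t). -/

import Mathlib

/-!
Modulo `m` a Weierstrass polynomial of degree `d` reduces to `tᵈ`, so the reduction of `q` in
`(A/m)[[t]]` has order exactly `d` and its `d`-th coefficient is a unit. Dividing by `q` is then an
`m`-adically small perturbation of dividing by `tᵈ`: the successive approximations converge by
completeness, and a relation `g·q = r` with `deg r < d` forces the coefficients of `g` into every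
power of `m`, which gives uniqueness.
-/

open IsLocalRing Polynomial

/-- A Weierstrass polynomial of degree `d` over a local ring: a monic polynomial of
degree `d` all of whose non-leading coefficients lie in the maximal ideal. -/
def IsWeierstrassPolynomial {A : Type*} [CommRing A] [IsLocalRing A]
    (q : Polynomial A) (d : ℕ) : Prop :=
  q.Monic ∧ q.natDegree = d ∧ ∀ i < d, q.coeff i ∈ maximalIdeal A

theorem IsWeierstrassPolynomial.isDistinguishedAt {A : Type*} [CommRing A] [IsLocalRing A]
    {q : A[X]} {d : ℕ} (hq : IsWeierstrassPolynomial q d) :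
    q.IsDistinguishedAt (maximalIdeal A) where
  mem hn := hq.2.2 _ (hq.2.1 ▸ hn)
  monic := hq.1

namespace Polynomial.IsDistinguishedAt

variable {R : Type*} [CommRing R] {I : Ideal R} {g : R[X]}

theorem toNat_order_map_eq_natDegree (hg : g.IsDistinguishedAt I) (hI : I ≠ ⊤) :
    ((g : PowerSeries R).map (Ideal.Quotient.mk I)).order.toNat = g.natDegree := by
  have := hg.coe_natDegree_eq_order_map (g : PowerSeries R) 1
    (by rwa [map_one, ← Ideal.ne_top_iff_one]) (mul_one _).symm
  rw [← this, ENat.toNat_natCast]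

theorem existsUnique_eq_mul_add [IsAdicComplete I R] (hg : g.IsDistinguishedAt I) (hI : I ≠ ⊤)
    (f : PowerSeries R) :
    ∃! qr : PowerSeries R × R[X],
      qr.2.degree < g.natDegree ∧ f = qr.1 * (g : PowerSeries R) + (qr.2 : PowerSeries R) := by
  have H := hg.isWeierstrassDivisorAt hI
  rw [← hg.toNat_order_map_eq_natDegree hI]
  obtain ⟨hdeg, heq⟩ := H.isWeierstrassDivisionAt_div_mod f
  refine ⟨(H.div f, H.mod f), ⟨hdeg, mul_comm (g : PowerSeries R) _ ▸ heq⟩, ?_⟩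
  rintro ⟨q', r'⟩ ⟨hdeg', heq'⟩
  obtain ⟨rfl, rfl⟩ := H.eq_of_mul_add_eq_mul_add (q := q') (q' := H.div f) hdeg' hdeg
    (by rw [mul_comm]; exact heq'.symm.trans heq)
  rfl

end Polynomial.IsDistinguishedAt

/-- Weierstrass division: if `(A, m)` is a complete local ring and `q ∈ A[t]` a
Weierstrass polynomial of degree `d`, then every `f ∈ A[[t]]` can be written uniquely as
`f = g·q + r` with `g ∈ A[[t]]` and `r ∈ A[t]` of degree `< d`. -/
theorem weierstrass_division {A : Type*} [CommRing A] [IsLocalRing A]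
    [IsAdicComplete (maximalIdeal A) A]
    {d : ℕ} {q : Polynomial A} (hq : IsWeierstrassPolynomial q d)
    (f : PowerSeries A) :
    ∃! gr : PowerSeries A × Polynomial A,
      gr.2.degree < (d : WithBot ℕ) ∧
        f = gr.1 * (q : PowerSeries A) + (gr.2 : PowerSeries A) := by
  have := hq.isDistinguishedAt.existsUnique_eq_mul_add (maximalIdeal.isMaximal A).ne_top f
  rwa [hq.2.1] at this
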